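/- arXiv:2311.06017 — 4 statements merged into one kernel-verified Lean document; each statement's English description precedes it below -/
import Mathlib

section
/- Let A ∈ ℤ^{m×n} with rank(A) = n, and let b ∈ ℤ^m lie in the real column span of A. Let U ∈ ℤ^{n×m} and R ∈ ℤ^{(m−n)×m} be such that the stacked m×m matrix [U; R] has determinant ±1 and [U; R]·A = [I_n; 0]. Then Q(A,b) = conv{ y ∈ ℤ^m : y ≥ 0, R y = 0 } = { y ∈ ℝ^m : y ≥ 0, R y = 0 }. -/
/-!
Since `[U; R]` is unimodular and `[U; R] A = [I; 0]`, we have `R A = 0`, and every integer `w`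
with `R w = 0` is `A (U w)`. As `b` lies in the column span of `A`, also `R b = 0`; hence the
integer slack vectors `b - A x` are exactly the integer points of `ker R`, and `Q(A,b)` is the
convex hull of the integer points of the cone `{y ≥ 0, R y = 0}`.

That this hull is the whole cone is a rationality argument. For `y` in the cone, let `W` be the
rational subspace of `ker R` of vectors vanishing where `y` does. The orthogonal projection `P`
onto `W` has rational entries and fixes `y`. The point `y` lies in the convex hull of the corners
of a small box with rational corners around it; `P` maps these corners to rational points of `W`
close to `y`, hence nonnegative, and after clearing denominators each such point lies on a segment
from `0` to an integer point of the cone.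
-/

open Matrix

/-- `Q(A,b)`: the convex hull of the nonnegative integer slack vectors `b - A x`, `x ∈ ℤⁿ`. -/
noncomputable def Qset {ι : Type*} [Fintype ι] {n : ℕ} (A : Matrix ι (Fin n) ℤ) (b : ι → ℤ) :
    Set (ι → ℝ) :=
  convexHull ℝ
    {y | ∃ x : Fin n → ℤ, 0 ≤ b - A.mulVec x ∧ y = fun i => (((b - A.mulVec x) i : ℤ) : ℝ)}

namespace Matrix

variable {ι κ : Type*} [Fintype ι]

theorem map_mulVec_comp_eq_zero_iff {R S : Type*} [NonAssocSemiring R] [NonAssocSemiring S]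
    {f : R →+* S} (hf : Function.Injective f) (M : Matrix κ ι R) (v : ι → R) :
    M.map f *ᵥ (f ∘ v) = 0 ↔ M *ᵥ v = 0 := by
  simp only [funext_iff, Pi.zero_apply, ← RingHom.map_mulVec, map_eq_zero_iff f hf]

theorem mulVec_injective_of_det_submatrix_ne_zero {S : Type*} [CommRing S] [IsDomain S]
    [Fintype κ] [DecidableEq κ] (M : Matrix κ ι S) (e : κ ≃ ι) (h : (M.submatrix id e).det ≠ 0) :
    Function.Injective M.mulVec := by
  intro v w hvw
  refine e.surjective.injective_comp_right (mulVec_injective_of_det_ne_zero h ?_)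
  simp [submatrix_mulVec_equiv, Function.comp_assoc, hvw]

theorem exists_sub_mulVec_eq_iff {ν ρ S : Type*} [Fintype ν] [DecidableEq ν] [Ring S]
    {A : Matrix ι ν S} {U : Matrix ν ι S} {R : Matrix ρ ι S}
    (hinj : Function.Injective (fromRows U R).mulVec) (hUA : U * A = 1) (hRA : R * A = 0)
    {b : ι → S} (hRb : R *ᵥ b = 0) (w : ι → S) :
    (∃ x, b - A *ᵥ x = w) ↔ R *ᵥ w = 0 := by
  constructor
  · rintro ⟨x, rfl⟩
    rw [mulVec_sub, hRb, mulVec_mulVec, hRA, zero_mulVec, sub_zero]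
  · intro hRw
    have hRbw : R *ᵥ (b - w) = 0 := by rw [mulVec_sub, hRb, hRw, sub_zero]
    refine ⟨U *ᵥ (b - w), ?_⟩
    suffices A *ᵥ (U *ᵥ (b - w)) = b - w by rw [this, sub_sub_cancel]
    apply hinj
    rw [fromRows_mulVec, fromRows_mulVec, mulVec_mulVec (M := U), mulVec_mulVec (M := R), hUA, hRA,
      one_mulVec, zero_mulVec, hRbw]

section OrderedField

variable [Fintype κ] {K : Type*} [Field K] [LinearOrder K] [IsStrictOrderedRing K]

theorem range_mulVecLin_self_mul_transpose (M : Matrix κ ι K) :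
    LinearMap.range (M * Mᵀ).mulVecLin = LinearMap.range M.mulVecLin := by
  refine Submodule.eq_of_le_of_finrank_eq ?_ M.rank_self_mul_transpose
  rintro _ ⟨c, rfl⟩
  exact ⟨Mᵀ *ᵥ c, mulVec_mulVec _ _ _⟩

theorem exists_self_mul_transpose_mul_eq [DecidableEq ι] (M : Matrix κ ι K) :
    ∃ C : Matrix κ ι K, M * Mᵀ * C = M := by
  have hcol (j : ι) : M.col j ∈ LinearMap.range (M * Mᵀ).mulVecLin := by
    rw [range_mulVecLin_self_mul_transpose]
    exact ⟨Pi.single j 1, M.mulVec_single_one j⟩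
  choose c hc using hcol
  refine ⟨(of c)ᵀ, ext_of_mulVec_single fun j => ?_⟩
  rw [← mulVec_mulVec, mulVec_single_one, mulVec_single_one]
  exact hc j

/-- `P = 1 - Mᵀ C` is the orthogonal projection onto `ker M`, and it has entries in `K`. -/
theorem exists_mul_eq_zero_and_map_mulVec_eq_self [DecidableEq ι]
    {L : Type*} [Field L] [LinearOrder L] [IsStrictOrderedRing L] (f : K →+* L)
    (M : Matrix κ ι K) :
    ∃ P : Matrix ι ι K, M * P = 0 ∧ ∀ y, M.map f *ᵥ y = 0 → P.map f *ᵥ y = y := by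
  obtain ⟨C, hC⟩ := exists_self_mul_transpose_mul_eq M
  refine ⟨1 - Mᵀ * C, by rw [Matrix.mul_sub, Matrix.mul_one, ← Matrix.mul_assoc, hC, sub_self],
    fun y hy => ?_⟩
  have hP : (1 - Mᵀ * C).map f = 1 - (M.map f)ᵀ * C.map f := by
    rw [← RingHom.mapMatrix_apply, map_sub, map_one, RingHom.mapMatrix_apply, Matrix.map_mul,
      transpose_map]
  have hzker : ((M.map f)ᵀᵀ * (M.map f)ᵀ) *ᵥ (C.map f *ᵥ y) = 0 := by
    rw [transpose_transpose, mulVec_mulVec, ← transpose_map, ← Matrix.map_mul,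
      ← Matrix.map_mul, hC, hy]
  have hz : (M.map f)ᵀ *ᵥ (C.map f *ᵥ y) = 0 := LinearMap.mem_ker.mp <|
    ker_mulVecLin_transpose_mul_self (M.map f)ᵀ ▸ LinearMap.mem_ker.mpr hzker
  rw [hP, sub_mulVec, one_mulVec, ← mulVec_mulVec, hz, sub_zero]

end OrderedField

end Matrix

variable {ι κ : Type*} [Fintype ι]

theorem mem_convexHull_inter_range_ratCast {O : Set (ι → ℝ)} (hO : IsOpen O) {x : ι → ℝ}
    (hx : x ∈ O) : x ∈ convexHull ℝ (O ∩ Set.range fun q : ι → ℚ => Rat.cast ∘ q) := by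
  obtain ⟨δ, hδ, hball⟩ := Metric.isOpen_iff.mp hO x hx
  choose a ha using fun i => exists_rat_btwn (sub_lt_self (x i) hδ)
  choose b hb using fun i => exists_rat_btwn (lt_add_of_pos_right (x i) hδ)
  have hbox : x ∈ convexHull ℝ (Set.univ.pi fun i => {(a i : ℝ), (b i : ℝ)}) :=
    mem_convexHull_pi fun i _ => by
      rw [convexHull_pair, segment_eq_Icc ((ha i).2.trans (hb i).1).le]
      exact ⟨(ha i).2.le, (hb i).1.le⟩
  refine convexHull_mono (fun d hd => ?_) hbox
  have hd' (i : ι) : d i = a i ∨ d i = b i := hd i trivial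
  refine ⟨hball ((dist_pi_lt_iff hδ).mpr fun i => ?_), fun i => if d i = a i then a i else b i, ?_⟩
  · rw [Real.dist_eq, abs_lt]
    rcases hd' i with h | h <;> rw [h] <;> constructor <;> linarith [ha i, hb i]
  · funext i
    simp only [Function.comp_apply]
    split_ifs with h
    exacts [h.symm, ((hd' i).resolve_left h).symm]

theorem mem_convexHull_inter_ratCast_ker [Fintype κ] (M : Matrix κ ι ℚ) {O : Set (ι → ℝ)}
    (hO : IsOpen O) {y : ι → ℝ} (hyO : y ∈ O) (hMy : M.map (Rat.cast : ℚ → ℝ) *ᵥ y = 0) :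
    y ∈ convexHull ℝ (O ∩ {z | ∃ w : ι → ℚ, M *ᵥ w = 0 ∧ z = Rat.cast ∘ w}) := by
  classical
  obtain ⟨P, hMP, hPy⟩ := exists_mul_eq_zero_and_map_mulVec_eq_self (Rat.castHom ℝ) M
  have hcont : Continuous fun z : ι → ℝ => P.map (Rat.castHom ℝ) *ᵥ z :=
    continuous_const.matrix_mulVec continuous_id
  have hPO := Set.mem_image_of_mem (P.map (Rat.castHom ℝ)).mulVecLin <|
    mem_convexHull_inter_range_ratCast (hO.preimage hcont) (x := y)
      (by simpa only [Set.mem_preimage, hPy y hMy] using hyO)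
  rw [LinearMap.image_convexHull, mulVecLin_apply, hPy y hMy] at hPO
  refine convexHull_mono ?_ hPO
  rintro _ ⟨_, ⟨hqO, q, rfl⟩, rfl⟩
  have hcast : P.map (Rat.castHom ℝ) *ᵥ (Rat.cast ∘ q) = Rat.cast ∘ (P *ᵥ q) :=
    funext fun i => (RingHom.map_mulVec (Rat.castHom ℝ) P q i).symm
  rw [mulVecLin_apply, hcast]
  exact ⟨hcast ▸ hqO, P *ᵥ q, by rw [mulVec_mulVec, hMP, zero_mulVec], rfl⟩

theorem exists_pos_nat_mul_eq_intCast (q : ι → ℚ) :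
    ∃ N : ℕ, 0 < N ∧ ∃ v : ι → ℤ, ∀ i, (v i : ℚ) = N * q i := by
  choose t ht using fun i => Finset.dvd_prod_of_mem (fun j => (q j).den) (Finset.mem_univ i)
  refine ⟨∏ i, (q i).den, Finset.prod_pos fun i _ => (q i).pos, fun i => (q i).num * t i,
    fun i => ?_⟩
  rw [ht i]
  push_cast
  rw [← Rat.mul_den_eq_num]
  ring

theorem ratCast_mem_convexHull_of_nonneg_of_mulVec_eq_zero (R : Matrix κ ι ℤ) {q : ι → ℚ}
    (hq : 0 ≤ q) (hRq : R.map (Int.cast : ℤ → ℚ) *ᵥ q = 0) :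
    Rat.cast ∘ q ∈ convexHull ℝ
      {y : ι → ℝ | ∃ v : ι → ℤ, 0 ≤ v ∧ R *ᵥ v = 0 ∧ y = fun i => (v i : ℝ)} := by
  obtain ⟨N, hN, v, hv⟩ := exists_pos_nat_mul_eq_intCast q
  have hv0 : 0 ≤ v := fun i => by
    have : (0 : ℚ) ≤ v i := hv i ▸ mul_nonneg N.cast_nonneg (hq i)
    exact_mod_cast this
  have hRv : R *ᵥ v = 0 := by
    rw [← map_mulVec_comp_eq_zero_iff (Int.castRingHom ℚ).injective_int]
    have : Int.castRingHom ℚ ∘ v = (N : ℚ) • q := funext hv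
    rw [this, mulVec_smul, Int.coe_castRingHom, hRq, smul_zero]
  have hcast : Rat.cast ∘ q = (N : ℝ)⁻¹ • fun i => (v i : ℝ) := by
    funext i
    simp only [Function.comp_apply, Pi.smul_apply, smul_eq_mul]
    rw [eq_inv_mul_iff_mul_eq₀ (by positivity)]
    exact_mod_cast (hv i).symm
  rw [hcast]
  refine (convex_convexHull ℝ _).smul_mem_of_zero_mem (subset_convexHull ℝ _ ?_)
    (subset_convexHull ℝ _ ?_) ⟨by positivity, inv_le_one_of_one_le₀ (by exact_mod_cast hN)⟩
  · exact ⟨0, le_rfl, mulVec_zero R, by simp [Pi.zero_def]⟩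
  · exact ⟨v, hv0, hRv, rfl⟩

theorem mem_convexHull_of_nonneg_of_mulVec_eq_zero [Fintype κ] (R : Matrix κ ι ℤ) {y : ι → ℝ}
    (hy : 0 ≤ y) (hRy : R.map (Int.cast : ℤ → ℝ) *ᵥ y = 0) :
    y ∈ convexHull ℝ
      {z : ι → ℝ | ∃ v : ι → ℤ, 0 ≤ v ∧ R *ᵥ v = 0 ∧ z = fun i => (v i : ℝ)} := by
  classical
  -- cuts out the vectors of `ker R` that vanish wherever `y` does
  let M : Matrix (κ ⊕ ι) ι ℚ :=
    fromRows (R.map Int.cast) (diagonal fun i => if y i = 0 then 1 else 0)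
  have hMy : M.map (Rat.cast : ℚ → ℝ) *ᵥ y = 0 := by
    have hMℝ : M.map (Rat.cast : ℚ → ℝ) =
        fromRows (R.map Int.cast) (diagonal fun i => if y i = 0 then 1 else 0) := by
      ext (j | i) k
      · simp [M]
      · simp only [M, map_apply, fromRows_apply_inr, diagonal_apply]
        split_ifs <;> simp
    rw [hMℝ, fromRows_mulVec, hRy]
    ext (j | i)
    · rfl
    · by_cases hi : y i = 0 <;> simp [mulVec_diagonal, hi]
  have hO : IsOpen ({i | y i ≠ 0}.pi fun _ => Set.Ioi (0 : ℝ)) :=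
    isOpen_set_pi (Set.toFinite _) fun _ _ => isOpen_Ioi
  refine convexHull_min ?_ (convex_convexHull ℝ _)
    (mem_convexHull_inter_ratCast_ker M hO (fun i hi => (hy i).lt_of_ne' hi) hMy)
  rintro _ ⟨hwO, w, hMw, rfl⟩
  have hw' := congrFun hMw
  refine ratCast_mem_convexHull_of_nonneg_of_mulVec_eq_zero R (fun i => ?_)
    (funext fun j => by simpa [M, fromRows_mulVec] using hw' (Sum.inl j))
  by_cases hi : y i = 0
  · simpa [M, fromRows_mulVec, mulVec_diagonal, hi] using (hw' (Sum.inr i)).ge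
  · have hpos : (0 : ℝ) < w i := hwO i hi
    exact_mod_cast hpos.le

theorem convexHull_nonneg_int_ker_eq [Fintype κ] (R : Matrix κ ι ℤ) :
    convexHull ℝ {z : ι → ℝ | ∃ v : ι → ℤ, 0 ≤ v ∧ R *ᵥ v = 0 ∧ z = fun i => (v i : ℝ)} =
      {y | 0 ≤ y ∧ R.map (Int.cast : ℤ → ℝ) *ᵥ y = 0} := by
  refine subset_antisymm (convexHull_min ?_ ?_)
    fun y hy => mem_convexHull_of_nonneg_of_mulVec_eq_zero R hy.1 hy.2
  · rintro _ ⟨v, hv, hRv, rfl⟩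
    exact ⟨fun i => Int.cast_nonneg_iff.mpr (hv i),
      (map_mulVec_comp_eq_zero_iff (Int.castRingHom ℝ).injective_int R v).mpr hRv⟩
  · exact (convex_Ici 0).inter (LinearMap.ker (R.map (Int.cast : ℤ → ℝ)).mulVecLin).convex

theorem Qset_eq_convexHull_of_exists_sub_mulVec_eq_iff {n : ℕ} (A : Matrix ι (Fin n) ℤ)
    (b : ι → ℤ) (R : Matrix κ ι ℤ) (hslack : ∀ w, (∃ x, b - A *ᵥ x = w) ↔ R *ᵥ w = 0) :
    Qset A b = convexHull ℝ
      {y : ι → ℝ | ∃ v : ι → ℤ, 0 ≤ v ∧ R *ᵥ v = 0 ∧ y = fun i => (v i : ℝ)} := by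
  refine congrArg _ (Set.ext fun y => ⟨?_, ?_⟩)
  · rintro ⟨x, hx, rfl⟩
    exact ⟨_, hx, (hslack _).mp ⟨x, rfl⟩, rfl⟩
  · rintro ⟨w, hw, hRw, rfl⟩
    obtain ⟨x, rfl⟩ := (hslack w).mpr hRw
    exact ⟨x, hw, rfl⟩

theorem stmt3_general {m n k : ℕ} (hm : m = n + k)
    (A : Matrix (Fin m) (Fin n) ℤ) (b : Fin m → ℤ)
    (hb : ∃ x : Fin n → ℝ, (A.map (Int.cast : ℤ → ℝ)).mulVec x = fun i => (b i : ℝ))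
    (U : Matrix (Fin n) (Fin m) ℤ) (R : Matrix (Fin k) (Fin m) ℤ)
    (hdet :
      ((Matrix.fromRows U R).submatrix id
          (((finCongr hm).trans finSumFinEquiv.symm).symm : Fin n ⊕ Fin k → Fin m)).det = 1 ∨
      ((Matrix.fromRows U R).submatrix id
          (((finCongr hm).trans finSumFinEquiv.symm).symm : Fin n ⊕ Fin k → Fin m)).det = -1)
    (hmul : Matrix.fromRows U R * A =
      Matrix.fromRows (1 : Matrix (Fin n) (Fin n) ℤ) (0 : Matrix (Fin k) (Fin n) ℤ)) :
    Qset A b = convexHull ℝ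
      {y : Fin m → ℝ | ∃ yz : Fin m → ℤ,
        0 ≤ yz ∧ R.mulVec yz = 0 ∧ y = fun i => ((yz i : ℤ) : ℝ)} ∧
    Qset A b =
      {y : Fin m → ℝ | 0 ≤ y ∧ (R.map (Int.cast : ℤ → ℝ)).mulVec y = 0} := by
  obtain ⟨hUA, hRA⟩ := fromRows_inj (fromRows_mul U R A ▸ hmul)
  have hRb : R *ᵥ b = 0 := by
    obtain ⟨x, hx⟩ := hb
    have hbx : Int.castRingHom ℝ ∘ b = A.map (Int.castRingHom ℝ) *ᵥ x := hx.symm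
    rw [← map_mulVec_comp_eq_zero_iff (Int.castRingHom ℝ).injective_int, hbx, mulVec_mulVec,
      ← Matrix.map_mul, hRA, Matrix.map_zero _ (map_zero _), zero_mulVec]
  have hinj := mulVec_injective_of_det_submatrix_ne_zero (fromRows U R)
    ((finCongr hm).trans finSumFinEquiv.symm).symm
    (by rcases hdet with h | h <;> rw [h] <;> norm_num)
  have hQ := Qset_eq_convexHull_of_exists_sub_mulVec_eq_iff A b R
    (exists_sub_mulVec_eq_iff hinj hUA hRA hRb)
  exact ⟨hQ, hQ.trans (convexHull_nonneg_int_ker_eq R)⟩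

theorem stmt3 {m n k : ℕ} (hm : m = n + k)
    (A : Matrix (Fin m) (Fin n) ℤ) (b : Fin m → ℤ)
    (hrank : (A.map (Int.cast : ℤ → ℝ)).rank = n)
    (hb : ∃ x : Fin n → ℝ, (A.map (Int.cast : ℤ → ℝ)).mulVec x = fun i => (b i : ℝ))
    (U : Matrix (Fin n) (Fin m) ℤ) (R : Matrix (Fin k) (Fin m) ℤ)
    (hdet :
      ((Matrix.fromRows U R).submatrix id
          (((finCongr hm).trans finSumFinEquiv.symm).symm : Fin n ⊕ Fin k → Fin m)).det = 1 ∨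
      ((Matrix.fromRows U R).submatrix id
          (((finCongr hm).trans finSumFinEquiv.symm).symm : Fin n ⊕ Fin k → Fin m)).det = -1)
    (hmul : Matrix.fromRows U R * A =
      Matrix.fromRows (1 : Matrix (Fin n) (Fin n) ℤ) (0 : Matrix (Fin k) (Fin n) ℤ)) :
    Qset A b = convexHull ℝ
      {y : Fin m → ℝ | ∃ yz : Fin m → ℤ,
        0 ≤ yz ∧ R.mulVec yz = 0 ∧ y = fun i => ((yz i : ℤ) : ℝ)} ∧
    Qset A b =
      {y : Fin m → ℝ | 0 ≤ y ∧ (R.map (Int.cast : ℤ → ℝ)).mulVec y = 0} :=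
  stmt3_general hm A b hb U R hdet hmul
end

section
/- Let A ∈ ℤ^{m×n} with rank(A) = n such that the greatest common divisor of the absolute values of all n×n subdeterminants of A equals 1, and let b ∈ ℤ^m lie in the real column span of A. Then P(A,b) = conv(P(A,b) ∩ ℤ^n). -/
/-!
Every real solution `x₀` of `A x = b` is integral: Cramer's rule gives `det(A_f) · x₀ ∈ ℤⁿ` for
every `n × n` row selection `A_f`, and a Bézout combination of these minors equals `1`. Hence
`P(A,b) = x₀ + C` with `C = {y : A y ≤ 0}`, and it suffices that `C` is the convex hull of its
integer points. A point `y ∈ C` lies in the relative interior of the face cut out by the rows tight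
at `y`; that face spans a rationally defined subspace, so `y` is a convex combination of nearby
rational points of `C`, and each rational point `u ∈ C` lies on the segment from `0` to the integer
point `N u`.
-/

open Matrix

/-- `P(A,b) = {x ∈ ℝⁿ : A x ≤ b}`. -/
noncomputable def Pset {m n : ℕ} (A : Matrix (Fin m) (Fin n) ℤ) (b : Fin m → ℤ) :
    Set (Fin n → ℝ) :=
  {x | (A.map (Int.cast : ℤ → ℝ)).mulVec x ≤ fun i => (b i : ℝ)}

/-- A real vector is integral if every entry is an integer. -/
def IsIntVec {n : ℕ} (x : Fin n → ℝ) : Prop := ∀ i, ∃ z : ℤ, x i = (z : ℝ)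

open Submodule Set
open scoped Pointwise

theorem Finset.natAbs_gcd {ι : Type*} (s : Finset ι) (d : ι → ℤ) :
    (s.gcd d).natAbs = s.gcd fun i => (d i).natAbs := by
  classical
  induction s using Finset.induction_on with
  | empty => simp
  | insert a s _ ih =>
    rw [Finset.gcd_insert, Finset.gcd_insert, Int.natAbs_gcd, Int.gcd_eq_natAbs, ih]
    rfl

theorem exists_intCast_eq_of_gcd_eq_one {ι : Type*} {s : Finset ι} {d : ι → ℤ}
    (hd : s.gcd (fun i => (d i).natAbs) = 1) {x : ℝ} (hx : ∀ i ∈ s, ∃ k : ℤ, (d i : ℝ) * x = k) :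
    ∃ k : ℤ, x = k := by
  obtain ⟨g, hg⟩ := s.gcd_eq_sum_mul d
  have hunit : IsUnit (s.gcd d) := Int.isUnit_iff_natAbs_eq.2 (by rw [s.natAbs_gcd, hd])
  choose! k hk using hx
  have hgx : ((s.gcd d : ℤ) : ℝ) * x = ((∑ i ∈ s, g i * k i : ℤ) : ℝ) := by
    rw [hg]
    push_cast
    rw [Finset.sum_mul]
    exact Finset.sum_congr rfl fun i hi => by rw [← hk i hi]; ring
  refine ⟨s.gcd d * ∑ i ∈ s, g i * k i, ?_⟩
  rw [Int.cast_mul, ← hgx, ← mul_assoc, ← Int.cast_mul, Int.isUnit_mul_self hunit, Int.cast_one,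
    one_mul]

theorem det_smul_eq_adjugate_mulVec {κ R S : Type*} [Fintype κ] [DecidableEq κ] [CommRing R]
    [CommRing S] (f : R →+* S) (M : Matrix κ κ R) {x : κ → S} {c : κ → R}
    (hx : M.map f *ᵥ x = f ∘ c) : f M.det • x = f ∘ (adjugate M *ᵥ c) := by
  ext i
  rw [Function.comp_apply, RingHom.map_mulVec, ← hx, mulVec_mulVec, ← RingHom.mapMatrix_apply,
    RingHom.map_adjugate, ← RingHom.mapMatrix_apply, adjugate_mul, RingHom.map_det, smul_mulVec,
    one_mulVec]

theorem exists_intCast_eq_of_mulVec_eq {ι κ : Type*} [Fintype ι] [Fintype κ] [DecidableEq κ]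
    (A : Matrix ι κ ℤ) (b : ι → ℤ)
    (hgcd : (Finset.univ : Finset (κ → ι)).gcd (fun f => ((A.submatrix f id).det).natAbs) = 1)
    {x : κ → ℝ} (hx : A.map (Int.cast : ℤ → ℝ) *ᵥ x = fun i => (b i : ℝ)) (j : κ) :
    ∃ k : ℤ, x j = k := by
  refine exists_intCast_eq_of_gcd_eq_one hgcd fun f _ =>
    ⟨(adjugate (A.submatrix f id) *ᵥ (b ∘ f)) j, ?_⟩
  have hsub : (A.submatrix f id).map (Int.castRingHom ℝ) *ᵥ x = Int.castRingHom ℝ ∘ (b ∘ f) := by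
    ext i
    simpa [mulVec, dotProduct] using congrFun hx (f i)
  simpa using congrFun (det_smul_eq_adjugate_mulVec _ _ hsub) j

section SpanKer

variable {K L E : Type*} [Field K] [Field L] [Algebra K L] [AddCommGroup E] [Module K E]
  [Module L E] [IsScalarTower K L E]

/-- For `q₀ ∈ Q` with `f q₀ ≠ 0`, the projection `w ↦ w - (f w / f q₀) • q₀` onto `ker f` maps `Q`
into itself, because `f` takes `K`-rational values on `Q`. -/
theorem span_inf_ker_le_span_inf_ker (Q : Submodule K E) (f : E →ₗ[L] L)
    (hf : ∀ v ∈ Q, f v ∈ (algebraMap K L).range) :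
    span L (Q : Set E) ⊓ LinearMap.ker f ≤
      span L ((Q ⊓ LinearMap.ker (f.restrictScalars K) : Submodule K E) : Set E) := by
  by_cases hQ : ∀ v ∈ Q, f v = 0
  · exact inf_le_left.trans (span_mono fun v hv => ⟨hv, hQ v hv⟩)
  push Not at hQ
  obtain ⟨q₀, hq₀, hfq₀⟩ := hQ
  let π : E →ₗ[L] E := LinearMap.id - (f q₀)⁻¹ • f.smulRight q₀
  have hπ : ∀ w, π w = w - (f w / f q₀) • q₀ := fun w => by
    simp [π, div_eq_inv_mul, mul_smul]
  have hπQ : π '' Q ⊆ (Q ⊓ LinearMap.ker (f.restrictScalars K) : Submodule K E) := by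
    rintro _ ⟨w, hw, rfl⟩
    obtain ⟨c, hc⟩ := hf w hw
    obtain ⟨c₀, hc₀⟩ := hf q₀ hq₀
    refine ⟨?_, ?_⟩
    · rw [hπ, ← hc, ← hc₀, ← map_div₀, algebraMap_smul]
      exact Q.sub_mem hw (Q.smul_mem _ hq₀)
    · simp [hπ, hfq₀]
  rintro v ⟨hv, hfv⟩
  have hπv : π v = v := by simp [hπ, LinearMap.mem_ker.1 hfv]
  rw [← hπv]
  exact span_mono hπQ (span_image π ▸ mem_map_of_mem hv)

theorem span_inf_iInf_ker_le {ι : Type*} (Q : Submodule K E) (f : ι → E →ₗ[L] L)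
    (hf : ∀ i, ∀ v ∈ Q, f i v ∈ (algebraMap K L).range) (s : Finset ι) :
    span L (Q : Set E) ⊓ ⨅ i ∈ s, LinearMap.ker (f i) ≤
      span L ((Q ⊓ ⨅ i ∈ s, LinearMap.ker ((f i).restrictScalars K) : Submodule K E) : Set E) := by
  classical
  induction s using Finset.induction_on with
  | empty => simp
  | insert a s _ ih =>
    let Qs := Q ⊓ ⨅ i ∈ s, LinearMap.ker ((f i).restrictScalars K)
    calc span L (Q : Set E) ⊓ ⨅ i ∈ insert a s, LinearMap.ker (f i)
        = span L (Q : Set E) ⊓ (⨅ i ∈ s, LinearMap.ker (f i)) ⊓ LinearMap.ker (f a) := by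
          rw [Finset.iInf_insert, inf_comm (LinearMap.ker (f a)), inf_assoc]
      _ ≤ span L (Qs : Set E) ⊓ LinearMap.ker (f a) := inf_le_inf_right _ ih
      _ ≤ span L ((Qs ⊓ LinearMap.ker ((f a).restrictScalars K) : Submodule K E) : Set E) :=
          span_inf_ker_le_span_inf_ker Qs (f a) fun v hv => hf a v hv.1
      _ = _ := by rw [Finset.iInf_insert, inf_comm (LinearMap.ker _), inf_assoc]

end SpanKer

section Rational

variable {κ : Type*}

noncomputable def rationalVectors (κ : Type*) : Submodule ℚ (κ → ℝ) :=
  Submodule.pi univ fun _ => LinearMap.range (Algebra.linearMap ℚ ℝ)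

theorem mem_rationalVectors {x : κ → ℝ} :
    x ∈ rationalVectors κ ↔ ∀ i, ∃ q : ℚ, (q : ℝ) = x i := by
  simp [rationalVectors, Submodule.mem_pi]

theorem span_rationalVectors [Finite κ] : span ℝ (rationalVectors κ : Set (κ → ℝ)) = ⊤ := by
  classical
  refine eq_top_iff.2 ((Pi.basisFun ℝ κ).span_eq.symm.le.trans (span_mono ?_))
  rintro _ ⟨i, rfl⟩
  refine mem_rationalVectors.2 fun j => ⟨(Pi.single i 1 : κ → ℚ) j, ?_⟩
  rw [Pi.basisFun_apply, Pi.single_apply, Pi.single_apply]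
  split_ifs <;> simp

theorem mem_convexHull_rationalVectors_inter_closedBall [Fintype κ] (x : κ → ℝ) {δ : ℝ}
    (hδ : 0 < δ) :
    x ∈ convexHull ℝ ((rationalVectors κ : Set (κ → ℝ)) ∩ Metric.closedBall x δ) := by
  let t : κ → Set ℝ := fun i => {r | (∃ q : ℚ, (q : ℝ) = r) ∧ |r - x i| ≤ δ}
  have ht : ∀ i, x i ∈ convexHull ℝ (t i) := by
    intro i
    obtain ⟨p, hp⟩ := exists_rat_btwn (show x i - δ < x i by linarith)
    obtain ⟨q, hq⟩ := exists_rat_btwn (show x i < x i + δ by linarith)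
    have hp_mem : (p : ℝ) ∈ t i := ⟨⟨p, rfl⟩, abs_le.2 ⟨by linarith, by linarith⟩⟩
    have hq_mem : (q : ℝ) ∈ t i := ⟨⟨q, rfl⟩, abs_le.2 ⟨by linarith, by linarith⟩⟩
    refine segment_subset_convexHull hp_mem hq_mem ?_
    rw [segment_eq_Icc (by linarith)]
    exact ⟨hp.2.le, hq.1.le⟩
  refine convexHull_mono ?_ (mem_convexHull_pi (s := univ) fun i _ => ht i)
  intro y hy
  exact ⟨mem_rationalVectors.2 fun i => (hy i trivial).1,
    (dist_pi_le_iff hδ.le).2 fun i => (hy i trivial).2⟩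

theorem exists_nat_smul_intCast_of_mem_rationalVectors [Finite κ] {u : κ → ℝ}
    (hu : u ∈ rationalVectors κ) : ∃ N : ℕ, 0 < N ∧ ∀ i, ∃ k : ℤ, ((N : ℝ) • u) i = k := by
  have := Fintype.ofFinite κ
  choose q hq using mem_rationalVectors.1 hu
  refine ⟨∏ i, (q i).den, Finset.prod_pos fun i _ => (q i).pos, fun i => ?_⟩
  obtain ⟨c, hc⟩ := Finset.dvd_prod_of_mem (fun i => (q i).den) (Finset.mem_univ i)
  refine ⟨c * (q i).num, ?_⟩
  have hnum : ((q i).num : ℝ) = q i * (q i).den := by exact_mod_cast (Rat.mul_den_eq_num (q i)).symm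
  rw [Pi.smul_apply, smul_eq_mul, ← hq, hc]
  push_cast
  rw [hnum]
  ring

end Rational

section ConvexHull

variable {E : Type*} [AddCommGroup E] [Module ℝ E] [Module ℚ E] [IsScalarTower ℚ ℝ E]
  [TopologicalSpace E] [IsTopologicalAddGroup E] [ContinuousSMul ℝ E]

/-- Write `y = ∑ cⱼ gⱼ` with `gⱼ ∈ Q` and perturb the coefficients `cⱼ` to nearby rationals. -/
theorem mem_convexHull_inter_of_mem_span (Q : Submodule ℚ E) {U : Set E} (hU : IsOpen U) {y : E}
    (hyU : y ∈ U) (hy : y ∈ span ℝ (Q : Set E)) : y ∈ convexHull ℝ ((Q : Set E) ∩ U) := by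
  obtain ⟨k, c, g, rfl⟩ := mem_span_set'.1 hy
  let φ := Fintype.linearCombination ℝ (fun j => (g j : E))
  have hφ : Continuous φ := φ.continuous_of_finiteDimensional
  have hφQ : ∀ t ∈ rationalVectors (Fin k), φ t ∈ Q := by
    intro t ht
    choose q hq using mem_rationalVectors.1 ht
    rw [Fintype.linearCombination_apply]
    refine Q.sum_mem fun j _ => ?_
    rw [← hq, ← eq_ratCast (algebraMap ℚ ℝ), algebraMap_smul]
    exact Q.smul_mem _ (g j).2
  obtain ⟨δ, hδ, hball⟩ := Metric.isOpen_iff.1 (hU.preimage hφ) c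
    (by simpa [φ, Fintype.linearCombination_apply] using hyU)
  have hc := mem_convexHull_rationalVectors_inter_closedBall c (half_pos hδ)
  have := φ.image_convexHull _ ▸ mem_image_of_mem φ hc
  rw [Fintype.linearCombination_apply] at this
  refine convexHull_mono ?_ this
  rintro _ ⟨t, ⟨ht, htc⟩, rfl⟩
  exact ⟨hφQ t ht, hball (Metric.closedBall_subset_ball (half_lt_self hδ) htc)⟩

end ConvexHull

section Cone

variable {ι κ : Type*} [Fintype ι] [Fintype κ]

theorem mem_convexHull_rationalVectors_cone (A : Matrix ι κ ℚ) {y : κ → ℝ}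
    (hy : A.map ((↑) : ℚ → ℝ) *ᵥ y ≤ 0) :
    y ∈ convexHull ℝ ({v | A.map ((↑) : ℚ → ℝ) *ᵥ v ≤ 0} ∩ rationalVectors κ) := by
  classical
  set B := A.map ((↑) : ℚ → ℝ)
  let f : ι → (κ → ℝ) →ₗ[ℝ] ℝ := fun i => LinearMap.proj i ∘ₗ B.mulVecLin
  have hf : ∀ i, ∀ v ∈ rationalVectors κ, f i v ∈ (algebraMap ℚ ℝ).range := by
    intro i v hv
    choose q hq using mem_rationalVectors.1 hv
    obtain rfl : v = fun j => (q j : ℝ) := funext fun j => (hq j).symm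
    refine ⟨(A *ᵥ q) i, ?_⟩
    rw [RingHom.map_mulVec]
    rfl
  let s := Finset.univ.filter fun i => (B *ᵥ y) i = 0
  let Q := rationalVectors κ ⊓ ⨅ i ∈ s, LinearMap.ker ((f i).restrictScalars ℚ)
  have hyQ : y ∈ span ℝ (Q : Set (κ → ℝ)) := by
    refine span_inf_iInf_ker_le _ f hf s ⟨by rw [span_rationalVectors]; trivial, ?_⟩
    simp [s, f]
  let U := ⋂ i ∈ sᶜ, {v : κ → ℝ | f i v < 0}
  have hU : IsOpen U := isOpen_biInter_finset fun i _ =>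
    isOpen_lt (f i).continuous_of_finiteDimensional continuous_const
  have hyU : y ∈ U := by
    simp only [U, mem_iInter₂]
    intro i hi
    exact (hy i).lt_of_ne (by simpa [s] using hi)
  refine convexHull_mono ?_ (mem_convexHull_inter_of_mem_span Q hU hyU hyQ)
  rintro v ⟨⟨hvrat, hvker⟩, hvU⟩
  refine ⟨fun i => ?_, hvrat⟩
  by_cases hi : i ∈ s
  · exact ((mem_iInf _).1 ((mem_iInf _).1 hvker i) hi : f i v = 0).le
  · exact (mem_iInter₂.1 hvU i (Finset.mem_compl.2 hi)).le

end Cone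

section IntegerHull

variable {ι : Type*} {n : ℕ}

theorem mem_convexHull_intVec_cone_of_rational (B : Matrix ι (Fin n) ℝ) {u : Fin n → ℝ}
    (hu : B *ᵥ u ≤ 0) (hurat : u ∈ rationalVectors (Fin n)) :
    u ∈ convexHull ℝ {v | B *ᵥ v ≤ 0 ∧ IsIntVec v} := by
  obtain ⟨N, hN, hNu⟩ := exists_nat_smul_intCast_of_mem_rationalVectors hurat
  have h0 : (0 : Fin n → ℝ) ∈ {v | B *ᵥ v ≤ 0 ∧ IsIntVec v} :=
    ⟨by simp, fun _ => ⟨0, by simp⟩⟩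
  have hNu' : (N : ℝ) • u ∈ {v | B *ᵥ v ≤ 0 ∧ IsIntVec v} :=
    ⟨by rw [mulVec_smul]; exact smul_nonpos_of_nonneg_of_nonpos (by positivity) hu, hNu⟩
  have := (convex_convexHull ℝ _).smul_mem_of_zero_mem (subset_convexHull ℝ _ h0)
    (subset_convexHull ℝ _ hNu') (t := (N : ℝ)⁻¹)
    ⟨by positivity, inv_le_one_of_one_le₀ (by exact_mod_cast hN)⟩
  rwa [smul_smul, inv_mul_cancel₀ (by positivity), one_smul] at this

theorem mem_convexHull_intVec_cone [Fintype ι] (A : Matrix ι (Fin n) ℤ) {y : Fin n → ℝ}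
    (hy : A.map (Int.cast : ℤ → ℝ) *ᵥ y ≤ 0) :
    y ∈ convexHull ℝ {v | A.map (Int.cast : ℤ → ℝ) *ᵥ v ≤ 0 ∧ IsIntVec v} := by
  have hA : A.map (Int.cast : ℤ → ℝ) = (A.map (Int.cast : ℤ → ℚ)).map ((↑) : ℚ → ℝ) := by
    ext; simp
  rw [hA] at hy ⊢
  exact convexHull_min (fun u hu => mem_convexHull_intVec_cone_of_rational _ hu.1 hu.2)
    (convex_convexHull ℝ _) (mem_convexHull_rationalVectors_cone _ hy)

end IntegerHull

theorem convex_Pset {m n : ℕ} (A : Matrix (Fin m) (Fin n) ℤ) (b : Fin m → ℤ) :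
    Convex ℝ (Pset A b) :=
  (convex_Iic _).linear_preimage (A.map (Int.cast : ℤ → ℝ)).mulVecLin

theorem stmt4_general {m n : ℕ} (A : Matrix (Fin m) (Fin n) ℤ) (b : Fin m → ℤ)
    (hgcd : (Finset.univ : Finset (Fin n → Fin m)).gcd
      (fun f => ((A.submatrix f id).det).natAbs) = 1)
    (hb : ∃ x : Fin n → ℝ, (A.map (Int.cast : ℤ → ℝ)).mulVec x = fun i => (b i : ℝ)) :
    Pset A b = convexHull ℝ {x ∈ Pset A b | IsIntVec x} := by
  obtain ⟨x₀, hx₀⟩ := hb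
  have hx₀int : IsIntVec x₀ := exists_intCast_eq_of_mulVec_eq A b hgcd hx₀
  have hPset : ∀ x, x ∈ Pset A b ↔ A.map (Int.cast : ℤ → ℝ) *ᵥ (x - x₀) ≤ 0 := fun x => by
    rw [Pset, mem_ofPred, mulVec_sub, hx₀, sub_nonpos]
  refine (convexHull_min (sep_subset _ _) (convex_Pset A b)).antisymm' fun x hx => ?_
  have hx : x ∈ x₀ +ᵥ convexHull ℝ {v | A.map (Int.cast : ℤ → ℝ) *ᵥ v ≤ 0 ∧ IsIntVec v} :=
    ⟨x - x₀, mem_convexHull_intVec_cone A ((hPset x).1 hx), by simp [vadd_eq_add]⟩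
  rw [← convexHull_vadd] at hx
  refine convexHull_mono ?_ hx
  rintro _ ⟨v, ⟨hv, hvint⟩, rfl⟩
  refine ⟨(hPset _).2 (by simpa [vadd_eq_add] using hv), fun i => ?_⟩
  obtain ⟨k, hk⟩ := hx₀int i
  obtain ⟨l, hl⟩ := hvint i
  exact ⟨k + l, by simp [hk, hl]⟩

theorem stmt4 {m n : ℕ} (A : Matrix (Fin m) (Fin n) ℤ) (b : Fin m → ℤ)
    (hrank : (A.map (Int.cast : ℤ → ℝ)).rank = n)
    (hgcd : (Finset.univ : Finset (Fin n → Fin m)).gcd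
      (fun f => ((A.submatrix f id).det).natAbs) = 1)
    (hb : ∃ x : Fin n → ℝ, (A.map (Int.cast : ℤ → ℝ)).mulVec x = fun i => (b i : ℝ)) :
    Pset A b = convexHull ℝ {x ∈ Pset A b | IsIntVec x} :=
  stmt4_general A b hgcd hb
end

section
/- Let A ∈ ℤ^{m×n} be strictly Δ-modular with rank(A) = n, and let B be an n-element set of row indices of A such that the n×n row submatrix A_B satisfies |det A_B| = Δ. Then the matrix A · A_B^{−1} ∈ ℚ^{m×n} is totally unimodular. -/
/-! The rows of `A_B` become the identity rows of `M = A A_B⁻¹`. Completing the columns of a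
`k × k` submatrix of `M` by the missing identity rows gives a block-triangular `n × n` row
submatrix of `M` with the same determinant, and every `n × n` row submatrix `M_H = A_H A_B⁻¹`
has determinant `det A_H / det A_B ∈ {0, ±1}` by strict `Δ`-modularity. -/

open Matrix

/-- A rational matrix is totally unimodular if every square submatrix has
determinant `0`, `1`, or `-1`. -/
def IsTU {ι κ : Type*} (M : Matrix ι κ ℚ) : Prop :=
  ∀ (k : ℕ) (f : Fin k → ι) (g : Fin k → κ),
    (M.submatrix f g).det = 0 ∨ (M.submatrix f g).det = 1 ∨ (M.submatrix f g).det = -1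

namespace Matrix

variable {R ι κ : Type*} [CommRing R] [Fintype κ] [DecidableEq κ]

theorem exists_det_submatrix_eq_det_submatrix_id_of_submatrix_eq_one {M : Matrix ι κ R}
    {B : κ → ι} (hB : M.submatrix B id = 1) {k : ℕ} (f : Fin k → ι) {g : Fin k → κ}
    (hg : Function.Injective g) :
    ∃ h : κ → ι, (M.submatrix f g).det = (M.submatrix h id).det := by
  classical
  let e : Fin k ⊕ {j // j ∉ Set.range g} ≃ κ :=
    (Equiv.sumCongr (Equiv.ofInjective g hg) (Equiv.refl _)).trans
      (Equiv.sumCompl (· ∈ Set.range g))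
  let rows : Fin k ⊕ {j // j ∉ Set.range g} → ι := Sum.elim f (B ∘ Subtype.val)
  have hBrow : ∀ i j, M (B i) j = (1 : Matrix κ κ R) i j := fun i j => congrFun₂ hB i j
  have hblocks : (M.submatrix (rows ∘ e.symm) id).submatrix e e =
      fromBlocks (M.submatrix f g) (of fun i (j : {j // j ∉ Set.range g}) => M (f i) j) 0 1 := by
    ext (i | x) (j | y)
    · simp [e, rows]
    · simp [e, rows]
    · simp [e, rows, hBrow, one_apply_ne (fun h => x.2 ⟨j, h.symm⟩)]
    · simp [e, rows, hBrow, one_apply, Subtype.ext_iff]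
  refine ⟨rows ∘ e.symm, ?_⟩
  rw [← det_submatrix_equiv_self e, hblocks, det_fromBlocks_zero₂₁, det_one, mul_one]

end Matrix

theorem isTU_zero {ι κ : Type*} : IsTU (0 : Matrix ι κ ℚ) := by
  rintro (_ | k) f g
  · exact Or.inr (Or.inl det_isEmpty)
  · exact Or.inl (by simp)

theorem isTU_of_submatrix_eq_one {ι κ : Type*} [Fintype κ] [DecidableEq κ] {M : Matrix ι κ ℚ}
    {B : κ → ι} (hB : M.submatrix B id = 1)
    (hmaximal : ∀ h : κ → ι, (M.submatrix h id).det = 0 ∨ (M.submatrix h id).det = 1 ∨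
      (M.submatrix h id).det = -1) :
    IsTU M := by
  intro k f g
  by_cases hg : Function.Injective g
  · obtain ⟨h, hh⟩ := exists_det_submatrix_eq_det_submatrix_id_of_submatrix_eq_one hB f hg
    rw [hh]
    exact hmaximal h
  · obtain ⟨i, j, hij, hne⟩ := Function.not_injective_iff.mp hg
    exact Or.inl (det_zero_of_column_eq hne fun r => by simp [hij])

theorem div_eq_zero_or_one_or_neg_one {K : Type*} [DivisionRing K] {a b : K} (hb : b ≠ 0)
    (ha : a = 0 ∨ a = b ∨ a = -b) : a / b = 0 ∨ a / b = 1 ∨ a / b = -1 := by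
  rcases ha with rfl | rfl | rfl
  · simp
  · simp [hb]
  · simp [hb]

theorem stmt7_general {m n Δ : ℕ} (A : Matrix (Fin m) (Fin n) ℤ)
    (hstrict : ∀ f : Fin n → Fin m,
      (A.submatrix f id).det = 0 ∨ (A.submatrix f id).det = (Δ : ℤ) ∨
        (A.submatrix f id).det = -(Δ : ℤ))
    (B : Fin n → Fin m)
    (hdetB : ((A.submatrix B id).det).natAbs = Δ) :
    IsTU ((A.map (Int.cast : ℤ → ℚ)) * ((A.submatrix B id).map (Int.cast : ℤ → ℚ))⁻¹) := by
  set AB : Matrix (Fin n) (Fin n) ℚ := (A.submatrix B id).map Int.cast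
  have hABdet : AB.det = ((A.submatrix B id).det : ℚ) := (Int.cast_det _).symm
  obtain hΔ | hΔ := eq_or_ne Δ 0
  · have hsingular : ¬IsUnit AB.det := by simp [hABdet, ← Int.natAbs_eq_zero, hdetB, hΔ]
    rw [nonsing_inv_apply_not_isUnit AB hsingular, Matrix.mul_zero]
    exact isTU_zero
  have hdetB0 : (A.submatrix B id).det ≠ 0 := by rwa [← Int.natAbs_ne_zero, hdetB]
  have hunit : IsUnit AB.det := by simpa [hABdet] using hdetB0
  have hrows : ∀ h : Fin n → Fin m,
      ((A.map (Int.cast : ℤ → ℚ)) * AB⁻¹).submatrix h id =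
        (A.submatrix h id).map Int.cast * AB⁻¹ :=
    fun h => submatrix_mul _ _ h id id Function.bijective_id
  refine isTU_of_submatrix_eq_one (B := B) ?_ fun h => ?_
  · rw [hrows, mul_nonsing_inv _ hunit]
  · rw [hrows, det_mul, det_nonsing_inv, Ring.inverse_eq_inv, hABdet, ← Int.cast_det,
      ← div_eq_mul_inv]
    refine div_eq_zero_or_one_or_neg_one (Int.cast_ne_zero.mpr hdetB0) ?_
    have hdetH := hstrict h
    have hdetB_sign := Int.natAbs_eq (A.submatrix B id).det
    rw [hdetB] at hdetB_sign
    norm_cast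
    omega

theorem stmt7 {m n Δ : ℕ} (A : Matrix (Fin m) (Fin n) ℤ)
    (hrank : (A.map (Int.cast : ℤ → ℝ)).rank = n)
    (hstrict : ∀ f : Fin n → Fin m,
      (A.submatrix f id).det = 0 ∨ (A.submatrix f id).det = (Δ : ℤ) ∨
        (A.submatrix f id).det = -(Δ : ℤ))
    (B : Fin n → Fin m) (hB : Function.Injective B)
    (hdetB : ((A.submatrix B id).det).natAbs = Δ) :
    IsTU ((A.map (Int.cast : ℤ → ℚ)) * ((A.submatrix B id).map (Int.cast : ℤ → ℚ))⁻¹) :=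
  stmt7_general A hstrict B hdetB
end

section
/- Let A ∈ ℤ^{m×n} be strictly Δ-modular with rank(A) = n, with rows partitioned into an n-element set B satisfying |det A_B| = Δ and its complement N, and let b ∈ ℤ^m lie in the real column span of A. Then Q(A,b) = conv{ y ∈ ℤ^m : y ≥ 0, y_N = A_N A_B^{−1} y_B, and y_B − b_B ∈ A_B ℤ^n }, where y_B, y_N, b_B denote the corresponding subvectors and A_B, A_N the corresponding row submatrices. -/
/-!
Some maximal minor of `A` is nonzero, so strict `Δ`-modularity forces `Δ ≠ 0` and `A_B` is
invertible. The column span of `A` is then `{w | w_N = A_N A_B⁻¹ w_B}`, and an integer vector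
`w` lies in `A ℤⁿ` exactly when it lies in this span and `w_B ∈ A_B ℤⁿ`, since the `N`-part of
`A z` is determined by its `B`-part. Applied to `y - b`, with `b` in the column span, this
identifies the integer points `b - A x ≥ 0` with the generators of the right-hand hull.
-/

open Matrix

namespace Matrix

theorem exists_det_submatrix_ne_zero_of_rank_eq {K m : Type*} [Field K] [Finite m] {n : ℕ}
    (A : Matrix m (Fin n) K) (hA : A.rank = n) :
    ∃ f : Fin n → m, (A.submatrix f id).det ≠ 0 := by
  obtain ⟨v, hv_mem, -, hv_indep⟩ :=
    Submodule.exists_fun_fin_finrank_span_eq K (Set.range A.row)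
  have hr : Module.finrank K (Submodule.span K (Set.range A.row)) = n :=
    (rank_eq_finrank_span_row A).symm.trans hA
  choose g hg using hv_mem
  refine ⟨g ∘ Fin.cast hr.symm, fun h => ?_⟩
  have hrows : (A.submatrix (g ∘ Fin.cast hr.symm) id).row = v ∘ Fin.cast hr.symm := by
    funext i
    exact hg _
  have hunit : IsUnit (A.submatrix (g ∘ Fin.cast hr.symm) id) := by
    rw [← linearIndependent_rows_iff_isUnit, hrows]
    exact hv_indep.comp _ (Fin.cast_injective _)
  exact ((isUnit_iff_isUnit_det _).mp hunit).ne_zero h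

theorem map_nonsing_inv {R S : Type*} [CommRing R] [CommRing S] {n : Type*} [Fintype n]
    [DecidableEq n] (f : R →+* S) {A : Matrix n n R} (hA : IsUnit A.det) :
    A⁻¹.map f = (A.map f)⁻¹ := by
  refine (inv_eq_left_inv ?_).symm
  rw [← Matrix.map_mul, nonsing_inv_mul _ hA, Matrix.map_one _ f.map_zero f.map_one]

theorem map_mulVec_comp {R S m n : Type*} [NonAssocSemiring R] [NonAssocSemiring S] [Fintype n]
    (f : R →+* S) (A : Matrix m n R) (x : n → R) : A.map f *ᵥ (f ∘ x) = f ∘ (A *ᵥ x) :=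
  funext fun i => (RingHom.map_mulVec f A x i).symm

section BlockRows

variable {R S : Type*} [CommRing R] [CommRing S] {n p : Type*} [Fintype n] [DecidableEq n]

theorem mulVec_inr_eq_mul_inv_mulVec_inl (A : Matrix (n ⊕ p) n R)
    (hA : IsUnit (A.submatrix Sum.inl id).det) (x : n → R) :
    (fun j => (A *ᵥ x) (Sum.inr j)) =
      (A.submatrix Sum.inr id * (A.submatrix Sum.inl id)⁻¹) *ᵥ fun i => (A *ᵥ x) (Sum.inl i) := by
  change A.submatrix Sum.inr id *ᵥ x = _ *ᵥ (A.submatrix Sum.inl id *ᵥ x)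
  rw [mulVec_mulVec, Matrix.mul_assoc, nonsing_inv_mul _ hA, Matrix.mul_one]

theorem mulVec_inr_eq_of_map_mulVec_eq (f : R →+* S) (hf : Function.Injective f)
    (A : Matrix (n ⊕ p) n R) (hA : IsUnit (A.submatrix Sum.inl id).det) (v : n ⊕ p → R)
    {x : n → S} (hx : A.map f *ᵥ x = f ∘ v) :
    (fun j => v (Sum.inr j)) =
      (A.submatrix Sum.inr id * (A.submatrix Sum.inl id)⁻¹) *ᵥ fun i => v (Sum.inl i) := by
  have hAf : IsUnit ((A.map f).submatrix Sum.inl id).det := by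
    have h := hA.map f
    rw [RingHom.map_det] at h
    exact h
  have key := mulVec_inr_eq_mul_inv_mulVec_inl (A.map f) hAf x
  rw [hx] at key
  funext j
  apply hf
  calc f (v (Sum.inr j))
      = (((A.map f).submatrix Sum.inr id * ((A.map f).submatrix Sum.inl id)⁻¹) *ᵥ
          fun i => f (v (Sum.inl i))) j := congrFun key j
    _ = ((A.submatrix Sum.inr id * (A.submatrix Sum.inl id)⁻¹).map f *ᵥ
          (f ∘ fun i => v (Sum.inl i))) j := by
        rw [Matrix.map_mul, map_nonsing_inv f hA]
        rfl
    _ = _ := (RingHom.map_mulVec f _ _ j).symm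

theorem exists_eq_mulVec_iff (f : R →+* S) (hf : Function.Injective f) (A : Matrix (n ⊕ p) n R)
    (hA : IsUnit ((A.submatrix Sum.inl id).map f).det) (w : n ⊕ p → R) :
    (∃ x, w = A *ᵥ x) ↔
      (fun j => f (w (Sum.inr j))) = ((A.submatrix Sum.inr id).map f *
          ((A.submatrix Sum.inl id).map f)⁻¹) *ᵥ (fun i => f (w (Sum.inl i))) ∧
        ∃ z, (fun i => w (Sum.inl i)) = A.submatrix Sum.inl id *ᵥ z := by
  have key (x : n → R) : (fun j => f ((A *ᵥ x) (Sum.inr j))) = ((A.submatrix Sum.inr id).map f *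
      ((A.submatrix Sum.inl id).map f)⁻¹) *ᵥ fun i => f ((A *ᵥ x) (Sum.inl i)) := by
    have h := mulVec_inr_eq_mul_inv_mulVec_inl (A.map f) hA (f ∘ x)
    rw [map_mulVec_comp] at h
    exact h
  constructor
  · rintro ⟨x, rfl⟩
    exact ⟨key x, x, rfl⟩
  · rintro ⟨hN, z, hz⟩
    refine ⟨z, funext ?_⟩
    rintro (i | j)
    · exact congrFun hz i
    · have hzN : (fun j => f (w (Sum.inr j))) = fun j => f ((A *ᵥ z) (Sum.inr j)) := by
        rw [hN, key z]
        exact congrArg _ (funext fun i => congrArg f (congrFun hz i))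
      exact hf (congrFun hzN j)

theorem exists_eq_sub_mulVec_iff (f : R →+* S) (hf : Function.Injective f)
    (A : Matrix (n ⊕ p) n R) (hA : IsUnit ((A.submatrix Sum.inl id).map f).det)
    {b : n ⊕ p → R} (hb : (fun j => f (b (Sum.inr j))) = ((A.submatrix Sum.inr id).map f *
          ((A.submatrix Sum.inl id).map f)⁻¹) *ᵥ (fun i => f (b (Sum.inl i))))
    (y : n ⊕ p → R) :
    (∃ x, y = b - A *ᵥ x) ↔
      (fun j => f (y (Sum.inr j))) = ((A.submatrix Sum.inr id).map f *
          ((A.submatrix Sum.inl id).map f)⁻¹) *ᵥ (fun i => f (y (Sum.inl i))) ∧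
        ∃ z, (fun i => y (Sum.inl i) - b (Sum.inl i)) = A.submatrix Sum.inl id *ᵥ z := by
  have hshift : (∃ x, y = b - A *ᵥ x) ↔ ∃ x, y - b = A *ᵥ x :=
    ⟨fun ⟨x, hx⟩ => ⟨-x, by rw [hx, mulVec_neg]; abel⟩,
      fun ⟨x, hx⟩ => ⟨-x, by rw [mulVec_neg, ← hx]; abel⟩⟩
  rw [hshift, exists_eq_mulVec_iff f hf A hA]
  refine and_congr ?_ Iff.rfl
  have hsubN : (fun j => f ((y - b) (Sum.inr j))) =
      (fun j => f (y (Sum.inr j))) - fun j => f (b (Sum.inr j)) := funext fun j => map_sub f _ _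
  have hsubB : (fun i => f ((y - b) (Sum.inl i))) =
      (fun i => f (y (Sum.inl i))) - fun i => f (b (Sum.inl i)) := funext fun i => map_sub f _ _
  rw [hsubN, hsubB, mulVec_sub, ← hb, sub_left_inj]

end BlockRows

end Matrix

/-- Rows are partitioned into the `n`-element set `B` (indexed by `Sum.inl`) and its
complement `N` (indexed by `Sum.inr`). -/
theorem stmt8 {n k Δ : ℕ} (A : Matrix (Fin n ⊕ Fin k) (Fin n) ℤ) (b : Fin n ⊕ Fin k → ℤ)
    (hrank : (A.map (Int.cast : ℤ → ℝ)).rank = n)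
    (hstrict : ∀ f : Fin n → Fin n ⊕ Fin k,
      (A.submatrix f id).det = 0 ∨ (A.submatrix f id).det = (Δ : ℤ) ∨
        (A.submatrix f id).det = -(Δ : ℤ))
    (hdetB : ((A.submatrix Sum.inl id).det).natAbs = Δ)
    (hb : ∃ x : Fin n → ℝ, (A.map (Int.cast : ℤ → ℝ)).mulVec x = fun i => (b i : ℝ)) :
    Qset A b = convexHull ℝ
      {y : Fin n ⊕ Fin k → ℝ | ∃ yz : Fin n ⊕ Fin k → ℤ,
        0 ≤ yz ∧
        (fun j => ((yz (Sum.inr j) : ℤ) : ℚ)) =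
          ((A.submatrix Sum.inr id).map (Int.cast : ℤ → ℚ) *
            ((A.submatrix Sum.inl id).map (Int.cast : ℤ → ℚ))⁻¹).mulVec
              (fun i => ((yz (Sum.inl i) : ℤ) : ℚ)) ∧
        (∃ z : Fin n → ℤ,
          (fun i => yz (Sum.inl i) - b (Sum.inl i)) = (A.submatrix Sum.inl id).mulVec z) ∧
        y = fun i => ((yz i : ℤ) : ℝ)} := by
  have hΔ : Δ ≠ 0 := by
    obtain ⟨f, hf⟩ := exists_det_submatrix_ne_zero_of_rank_eq _ hrank
    rintro rfl
    have hf0 : (A.submatrix f id).det = 0 := by simpa using hstrict f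
    refine hf ?_
    rw [show ((A.map Int.cast).submatrix f id).det = ((A.submatrix f id).det : ℝ) from
      (Int.cast_det _).symm, hf0, Int.cast_zero]
  have hB : IsUnit ((A.submatrix Sum.inl id).map (Int.cast : ℤ → ℚ)).det := by
    rw [← Int.cast_det, isUnit_iff_ne_zero, Int.cast_ne_zero, ← Int.natAbs_ne_zero, hdetB]
    exact hΔ
  have hbQ : (fun j => ((b (Sum.inr j) : ℤ) : ℚ)) =
      ((A.submatrix Sum.inr id).map (Int.cast : ℤ → ℚ) *
        ((A.submatrix Sum.inl id).map (Int.cast : ℤ → ℚ))⁻¹) *ᵥ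
          fun i => ((b (Sum.inl i) : ℤ) : ℚ) := by
    obtain ⟨x, hx⟩ := hb
    refine mulVec_inr_eq_of_map_mulVec_eq (Rat.castHom ℝ) (Rat.castHom ℝ).injective
      (A.map (Int.cast : ℤ → ℚ)) hB (fun i => (b i : ℚ)) (x := x) ?_
    simpa [Matrix.map_map, Function.comp_def] using hx
  have hslack := exists_eq_sub_mulVec_iff (Int.castRingHom ℚ) Int.cast_injective A hB hbQ
  unfold Qset
  congr 1
  ext y
  constructor
  · rintro ⟨x, hx0, rfl⟩
    obtain ⟨hyN, hBz⟩ := (hslack _).mp ⟨x, rfl⟩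
    exact ⟨_, hx0, hyN, hBz, rfl⟩
  · rintro ⟨yz, hyz0, hyN, hBz, rfl⟩
    obtain ⟨x, rfl⟩ := (hslack yz).mpr ⟨hyN, hBz⟩
    exact ⟨x, hyz0, rfl⟩
end
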